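/- For the FetchSGD iterates with momentum, the virtual sequence w̃^t = w^t − e^t − (ηρ/(1−ρ)) u^{t−1} satisfies the recursion w̃^t = w̃^{t−1} − (η/(1−ρ)) g^{t−1}, i.e., the virtual sequence evolves as SGD with scaled learning rate η/(1−ρ). -/
import Mathlib


/-- the FetchSGD virtual sequence with momentum evolves as SGD with
scaled learning rate η/(1-ρ).  Here `u t` denotes the momentum vector u^t (with
u^{-1} = 0 encoded as `u 0 = 0` and `u (t+1) = ρ • u t + g t`), `e t` the error
accumulation e^t, `w t` the iterates, and `Cmp` an arbitrary compression map. -/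
theorem stmt_2 {E : Type*} [NormedAddCommGroup E] [NormedSpace ℝ E]
    (η ρ : ℝ) (hη : 0 < η) (hρ0 : 0 ≤ ρ) (hρ1 : ρ < 1)
    (Cmp : E → E) (g u e w Δ : ℕ → E)
    (hu0 : u 0 = 0) (hu : ∀ t, u (t + 1) = ρ • u t + g t)
    (he0 : e 0 = 0)
    (hΔ : ∀ t, Δ t = Cmp (η • u (t + 1) + e t))
    (he : ∀ t, e (t + 1) = η • u (t + 1) + e t - Δ t)
    (hw : ∀ t, w (t + 1) = w t - Δ t) :
    ∀ t, (w (t + 1) - e (t + 1) - ((η * ρ) / (1 - ρ)) • u (t + 1))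
        = (w t - e t - ((η * ρ) / (1 - ρ)) • u t) - (η / (1 - ρ)) • g t := by
  intro t
  have h1 : (1 : ℝ) - ρ ≠ 0 := by linarith
  rw [hw t, he t, hu t]
  have hc : (η * ρ) / (1 - ρ) = ρ * (η + (η * ρ) / (1 - ρ)) := by
    field_simp; ring
  have hc2 : η / (1 - ρ) = η + (η * ρ) / (1 - ρ) := by
    field_simp; ring
  rw [hc2]
  match_scalars <;> field_simp <;> ring
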